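/- arXiv:2211.09819 — 3 statements merged into one kernel-verified Lean document; each statement's English description precedes it below -/
import Mathlib

section
/- For the hat game with N players and q ≥ 2 colors, for every strategy s and every configuration b that is winning for s, there exists a coordinate i : Fin N such that for every color c ≠ b i, the configuration obtained from b by changing coordinate i to c is losing for s. (In particular, the set of losing configurations is adequate to the set of winning configurations.) -/
/-- A strategy for the hat game with `N` players and `q` colors: each player's guess
depends only on the hats of the other players. -/
def IsStrategy {N q : ℕ} (s : Fin N → (Fin N → Fin q) → Option (Fin q)) : Prop :=
  ∀ i : Fin N, ∀ b b' : Fin N → Fin q, (∀ j, j ≠ i → b j = b' j) → s i b = s i b'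

/-- A configuration `b` is winning for `s`: no player guesses incorrectly and at
least one player guesses correctly. -/
def Wins {N q : ℕ} (s : Fin N → (Fin N → Fin q) → Option (Fin q))
    (b : Fin N → Fin q) : Prop :=
  (∀ i c, s i b = some c → c = b i) ∧ ∃ i, s i b = some (b i)

/-- For every strategy and every winning configuration `b`, there is a coordinate `i`
such that changing coordinate `i` to any other color gives a losing configuration. -/
theorem losing_adequate_to_winning {N q : ℕ} (hq : 2 ≤ q)
    (s : Fin N → (Fin N → Fin q) → Option (Fin q)) (hs : IsStrategy s)
    (b : Fin N → Fin q) (hb : Wins s b) :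
    ∃ i : Fin N, ∀ c : Fin q, c ≠ b i → ¬ Wins s (Function.update b i c) := by
  obtain ⟨hcorr, i, hi⟩ := hb
  refine ⟨i, fun c hc hw => ?_⟩
  have heq : s i (Function.update b i c) = s i b :=
    hs i _ _ (fun j hj => Function.update_of_ne hj _ _)
  have : s i (Function.update b i c) = some (b i) := heq.trans hi
  have := hw.1 i (b i) this
  simp [Function.update_self] at this
  exact hc this.symm
end

section
/- For the hat game with N players and q ≥ 2 colors, for every adequate set A ⊆ (Fin N → Fin q) there exists a strategy s such that every configuration x ∉ A is winning for s (so every losing configuration of s belongs to A). -/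
/-- For every adequate set `A` (for every `x ∉ A` there is a coordinate `i` such that
every change of coordinate `i` to another color lands in `A`), there is a strategy
winning on every configuration outside `A`. -/
theorem exists_strategy_winning_off_adequate_set {N q : ℕ} (hq : 2 ≤ q)
    (A : Set (Fin N → Fin q))
    (hA : ∀ x ∉ A, ∃ i : Fin N, ∀ c : Fin q, c ≠ x i → Function.update x i c ∈ A) :
    ∃ s : Fin N → (Fin N → Fin q) → Option (Fin q),
      IsStrategy s ∧ ∀ x ∉ A, Wins s x := by
  classical
  set P : Fin N → (Fin N → Fin q) → Fin q → Prop := fun i b c =>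
    Function.update b i c ∉ A ∧ ∀ c', c' ≠ c → Function.update b i c' ∈ A with hP
  refine ⟨fun i b => if h : ∃ c, P i b c then some h.choose else none, ?_, ?_⟩
  · intro i b b' hbb'
    have hupd : ∀ c : Fin q, Function.update b i c = Function.update b' i c := by
      intro c
      funext j
      by_cases hj : j = i
      · subst hj; simp
      · simp [Function.update_apply, hj, hbb' j hj]
    have : P i b = P i b' := by
      funext c
      simp only [hP, hupd]
    show (if h : ∃ c, P i b c then some h.choose else none)
        = (if h : ∃ c, P i b' c then some h.choose else none)
    simp only [this]
  · intro x hx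
    have huniq : ∀ i c c', P i x c → P i x c' → c = c' := by
      intro i c c' hc hc'
      by_contra hne
      exact hc.1 (hc'.2 c hne)
    constructor
    · intro i c hc
      simp only at hc
      split_ifs at hc with h
      · injection hc with hc
        subst hc
        by_contra hne
        have h2 := h.choose_spec.2 (x i) (fun hh => hne hh.symm)
        rw [Function.update_eq_self] at h2
        exact hx h2
    · obtain ⟨i, hi⟩ := hA x hx
      have hPi : P i x (x i) := by
        refine ⟨?_, ?_⟩
        · rw [Function.update_eq_self]; exact hx
        · exact hi
      refine ⟨i, ?_⟩
      have h : ∃ c, P i x c := ⟨x i, hPi⟩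
      show (if h : ∃ c, P i x c then some h.choose else none) = some (x i)
      rw [dif_pos h]
      exact congrArg some (huniq i _ _ h.choose_spec hPi)
end

section
/- (Dominance lemma.) Let a, b : Fin 6 → ℕ with e := (Σ_{i=0}^{5} a i) − (Σ_{i=0}^{5} b i) ≥ 0, and suppose that for every j with 0 ≤ j ≤ 4 the partial sums satisfy Σ_{k=0}^{j} b k ≥ (Σ_{k=0}^{j} a k) − e. Then for every real p with 1/2 ≤ p ≤ 1, Σ_{i=0}^{5} b i · pⁱ (1−p)^{5−i} ≤ Σ_{i=0}^{5} a i · pⁱ (1−p)^{5−i}. -/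
set_option maxHeartbeats 1000000 in
/-- Dominance lemma: if `b` has partial sums that, up to the total excess `e`,
dominate those of `a`, then the total probability associated with `b` is at most
that of `a`, for every `1/2 ≤ p ≤ 1`. Here `a i` and `b i` count the elements with
exactly `i` zero-coordinates. -/
theorem dominance_lemma (a b : Fin 6 → ℕ) (e : ℤ)
    (he : e = (∑ i, (a i : ℤ)) - ∑ i, (b i : ℤ)) (he0 : 0 ≤ e)
    (hpart : ∀ j : Fin 6, (j : ℕ) ≤ 4 →
      (∑ k ∈ Finset.univ.filter (fun k : Fin 6 => k ≤ j), (a k : ℤ)) - e ≤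
        ∑ k ∈ Finset.univ.filter (fun k : Fin 6 => k ≤ j), (b k : ℤ))
    (p : ℝ) (hp1 : 1/2 ≤ p) (hp2 : p ≤ 1) :
    ∑ i : Fin 6, (b i : ℝ) * p ^ (i : ℕ) * (1 - p) ^ (5 - (i : ℕ)) ≤
      ∑ i : Fin 6, (a i : ℝ) * p ^ (i : ℕ) * (1 - p) ^ (5 - (i : ℕ)) := by
  have h0 := hpart 0 (by decide)
  have h1 := hpart 1 (by decide)
  have h2 := hpart 2 (by decide)
  have h3 := hpart 3 (by decide)
  have h4 := hpart 4 (by decide)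
  simp +decide only [Finset.sum_filter, Fin.sum_univ_six, if_true, if_false] at h0 h1 h2 h3 h4
  simp only [Fin.sum_univ_six] at he
  simp only [Fin.sum_univ_six, show ((0:Fin 6):ℕ) = 0 from rfl,
    show ((1:Fin 6):ℕ) = 1 from rfl, show ((2:Fin 6):ℕ) = 2 from rfl,
    show ((3:Fin 6):ℕ) = 3 from rfl, show ((4:Fin 6):ℕ) = 4 from rfl,
    show ((5:Fin 6):ℕ) = 5 from rfl]
  norm_num
  have r0 : ((a 0 : ℝ)) - e ≤ b 0 := by exact_mod_cast h0
  have r1 : ((a 0 : ℝ) + a 1) - e ≤ (b 0 : ℝ) + b 1 := by exact_mod_cast h1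
  have r2 : ((a 0 : ℝ) + a 1 + a 2) - e ≤ (b 0 : ℝ) + b 1 + b 2 := by exact_mod_cast h2
  have r3 : ((a 0 : ℝ) + a 1 + a 2 + a 3) - e ≤ (b 0 : ℝ) + b 1 + b 2 + b 3 := by exact_mod_cast h3
  have r4 : ((a 0 : ℝ) + a 1 + a 2 + a 3 + a 4) - e ≤ (b 0 : ℝ) + b 1 + b 2 + b 3 + b 4 := by
    exact_mod_cast h4
  have rhe : (e : ℝ) = ((a 0 : ℝ) + a 1 + a 2 + a 3 + a 4 + a 5)
      - ((b 0 : ℝ) + b 1 + b 2 + b 3 + b 4 + b 5) := by exact_mod_cast congrArg (Int.cast : ℤ → ℝ) he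
  have re0 : (0:ℝ) ≤ e := by exact_mod_cast he0
  have hp0 : (0:ℝ) ≤ p := by linarith
  have hq0 : (0:ℝ) ≤ 1 - p := by linarith
  have hd : (0:ℝ) ≤ p - (1 - p) := by linarith
  have g0 : (1-p) ^ 5 ≤ p * (1-p) ^ 4 := by nlinarith [mul_nonneg (pow_nonneg hq0 4) hd]
  have g1 : p * (1-p) ^ 4 ≤ p ^ 2 * (1-p) ^ 3 := by
    nlinarith [mul_nonneg (mul_nonneg hp0 (pow_nonneg hq0 3)) hd]
  have g2 : p ^ 2 * (1-p) ^ 3 ≤ p ^ 3 * (1-p) ^ 2 := by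
    nlinarith [mul_nonneg (mul_nonneg (pow_nonneg hp0 2) (pow_nonneg hq0 2)) hd]
  have g3 : p ^ 3 * (1-p) ^ 2 ≤ p ^ 4 * (1-p) := by
    nlinarith [mul_nonneg (mul_nonneg (pow_nonneg hp0 3) hq0) hd]
  have g4 : p ^ 4 * (1-p) ≤ p ^ 5 := by nlinarith [mul_nonneg (pow_nonneg hp0 4) hd]
  have m0 := mul_nonneg (by linarith : (0:ℝ) ≤ (e:ℝ) - ((a 0:ℝ) - b 0))
    (by linarith : (0:ℝ) ≤ p * (1-p) ^ 4 - (1-p) ^ 5)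
  have m1 := mul_nonneg (by linarith : (0:ℝ) ≤ (e:ℝ) - (((a 0:ℝ) + a 1) - ((b 0:ℝ) + b 1)))
    (by linarith : (0:ℝ) ≤ p ^ 2 * (1-p) ^ 3 - p * (1-p) ^ 4)
  have m2 := mul_nonneg
    (by linarith : (0:ℝ) ≤ (e:ℝ) - (((a 0:ℝ) + a 1 + a 2) - ((b 0:ℝ) + b 1 + b 2)))
    (by linarith : (0:ℝ) ≤ p ^ 3 * (1-p) ^ 2 - p ^ 2 * (1-p) ^ 3)
  have m3 := mul_nonneg
    (by linarith : (0:ℝ) ≤ (e:ℝ) - (((a 0:ℝ) + a 1 + a 2 + a 3) - ((b 0:ℝ) + b 1 + b 2 + b 3)))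
    (by linarith : (0:ℝ) ≤ p ^ 4 * (1-p) - p ^ 3 * (1-p) ^ 2)
  have m4 := mul_nonneg
    (by linarith :
      (0:ℝ) ≤ (e:ℝ) - (((a 0:ℝ) + a 1 + a 2 + a 3 + a 4) - ((b 0:ℝ) + b 1 + b 2 + b 3 + b 4)))
    (by linarith : (0:ℝ) ≤ p ^ 5 - p ^ 4 * (1-p))
  have m5 := mul_nonneg re0 (by positivity : (0:ℝ) ≤ (1-p) ^ 5)
  have key : (↑(a 0) * (1-p)^5 + ↑(a 1) * p * (1-p)^4 + ↑(a 2) * p^2 * (1-p)^3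
        + ↑(a 3) * p^3 * (1-p)^2 + ↑(a 4) * p^4 * (1-p) + ↑(a 5) * p^5)
      - (↑(b 0) * (1-p)^5 + ↑(b 1) * p * (1-p)^4 + ↑(b 2) * p^2 * (1-p)^3
        + ↑(b 3) * p^3 * (1-p)^2 + ↑(b 4) * p^4 * (1-p) + ↑(b 5) * p^5)
      = ((e:ℝ) - ((a 0:ℝ) - b 0)) * (p * (1-p)^4 - (1-p)^5)
      + ((e:ℝ) - (((a 0:ℝ) + a 1) - ((b 0:ℝ) + b 1))) * (p^2 * (1-p)^3 - p * (1-p)^4)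
      + ((e:ℝ) - (((a 0:ℝ) + a 1 + a 2) - ((b 0:ℝ) + b 1 + b 2))) * (p^3 * (1-p)^2 - p^2 * (1-p)^3)
      + ((e:ℝ) - (((a 0:ℝ) + a 1 + a 2 + a 3) - ((b 0:ℝ) + b 1 + b 2 + b 3)))
          * (p^4 * (1-p) - p^3 * (1-p)^2)
      + ((e:ℝ) - (((a 0:ℝ) + a 1 + a 2 + a 3 + a 4) - ((b 0:ℝ) + b 1 + b 2 + b 3 + b 4)))
          * (p^5 - p^4 * (1-p))
      + (e:ℝ) * (1-p)^5 := by linear_combination (-(p^5)) * rhe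
  linarith [m0, m1, m2, m3, m4, m5, key]
end
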